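/- arXiv:2305.09956 — 7 statements merged into one kernel-verified Lean document; each statement's English description precedes it below -/
import Mathlib

section
/- For the shifted sigmoid loss φ(α) = 1/(1 + exp(α - τ)) with τ > 0, one has inf_{α ∈ ℝ} (φ(α)/2 + φ(-α)/2) < φ(0). -/
theorem stmt_2 (τ : ℝ) (hτ : 0 < τ)
    (φ : ℝ → ℝ) (hφ : ∀ α, φ α = 1 / (1 + Real.exp (α - τ))) :
    (⨅ α : ℝ, (φ α / 2 + φ (-α) / 2)) < φ 0 := by
  have hbdd : BddBelow (Set.range fun α : ℝ => φ α / 2 + φ (-α) / 2) := by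
    refine ⟨0, ?_⟩
    rintro _ ⟨α, rfl⟩
    have h1 : 0 ≤ φ α := by
      rw [hφ]; positivity
    have h2 : 0 ≤ φ (-α) := by
      rw [hφ]; positivity
    dsimp; linarith
  have hle : (⨅ α : ℝ, (φ α / 2 + φ (-α) / 2)) ≤ φ τ / 2 + φ (-τ) / 2 :=
    ciInf_le hbdd τ
  refine lt_of_le_of_lt hle ?_
  set x := Real.exp (-τ) with hx
  have hx0 : 0 < x := Real.exp_pos _
  have hx1 : x < 1 := by
    rw [hx, Real.exp_lt_one_iff]; linarith
  have hφτ : φ τ = 1 / 2 := by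
    rw [hφ]; norm_num
  have hφmτ : φ (-τ) = 1 / (1 + x ^ 2) := by
    rw [hφ, hx, ← Real.exp_nat_mul]
    norm_num; ring_nf
  have hφ0 : φ 0 = 1 / (1 + x) := by
    rw [hφ, hx]; norm_num
  rw [hφτ, hφmτ, hφ0]
  have hcube : (x - 1) ^ 3 < 0 := by
    apply Odd.pow_neg ⟨1, by norm_num⟩ ; linarith
  have h1 : (0:ℝ) < 1 + x ^ 2 := by positivity
  have h2 : (0:ℝ) < 1 + x := by positivity
  have key : 1 / (1 + x) - (1 / 2 / 2 + 1 / (1 + x ^ 2) / 2)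
      = -((x - 1) ^ 3) / (4 * (1 + x ^ 2) * (1 + x)) := by
    field_simp
    ring
  have hpos : 0 < -((x - 1) ^ 3) / (4 * (1 + x ^ 2) * (1 + x)) :=
    div_pos (by linarith) (by positivity)
  linarith
end

section
/- Let φ: ℝ → ℝ be continuous, non-increasing, non-negative with lim_{α→∞} φ(α) = 0, and suppose inf_α (φ(α)/2 + φ(-α)/2) < φ(0). Then there exists a > 0 with φ(a) < φ(0) such that for every η ∈ [0,1] and every α with |α| < a, we have η·φ(α) + (1-η)·φ(-α) > inf_{β ∈ ℝ} (η·φ(β) + (1-η)·φ(-β)). -/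
open Filter Topology

theorem stmt_3 (φ : ℝ → ℝ) (hcont : Continuous φ) (hmono : Antitone φ)
    (hnonneg : ∀ α, 0 ≤ φ α) (hlim : Tendsto φ atTop (𝓝 0))
    (hgap : (⨅ α : ℝ, (φ α / 2 + φ (-α) / 2)) < φ 0) :
    ∃ a > (0 : ℝ), φ a < φ 0 ∧
      ∀ η ∈ Set.Icc (0 : ℝ) 1, ∀ α : ℝ, |α| < a →
        η * φ α + (1 - η) * φ (-α) > ⨅ β : ℝ, (η * φ β + (1 - η) * φ (-β)) := by
  obtain ⟨α₁, hα₁⟩ := exists_lt_of_ciInf_lt hgap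
  have hα₁ne : α₁ ≠ 0 := by
    rintro rfl
    rw [neg_zero] at hα₁; linarith
  set α₀ := |α₁| with hα₀def
  have hα₀pos : 0 < α₀ := abs_pos.mpr hα₁ne
  have hsum : φ α₀ + φ (-α₀) < 2 * φ 0 := by
    rcases abs_cases α₁ with ⟨h, _⟩ | ⟨h, _⟩ <;> rw [hα₀def, h]
    · linarith
    · rw [neg_neg]; linarith
  have hneg0 : φ 0 ≤ φ (-α₀) := hmono (by linarith)
  have hα₀lt : φ α₀ < φ 0 := by linarith
  set v := (max (φ α₀) (φ 0 - (φ 0 - (φ α₀ + φ (-α₀)) / 2)) + φ 0) / 2 with hvdef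
  have hmax1 : φ α₀ ≤ max (φ α₀) (φ 0 - (φ 0 - (φ α₀ + φ (-α₀)) / 2)) := le_max_left _ _
  have hmax2 : (φ α₀ + φ (-α₀)) / 2 ≤ max (φ α₀) (φ 0 - (φ 0 - (φ α₀ + φ (-α₀)) / 2)) := by
    have := le_max_right (φ α₀) (φ 0 - (φ 0 - (φ α₀ + φ (-α₀)) / 2))
    linarith
  have hmaxlt : max (φ α₀) (φ 0 - (φ 0 - (φ α₀ + φ (-α₀)) / 2)) < φ 0 :=
    max_lt hα₀lt (by linarith)
  have hv1 : φ α₀ < v := by rw [hvdef]; linarith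
  have hv2 : v < φ 0 := by rw [hvdef]; linarith
  have hv3 : (φ α₀ + φ (-α₀)) / 2 < v := by rw [hvdef]; linarith
  obtain ⟨a, ⟨ha0, haα₀⟩, hav⟩ :=
    intermediate_value_Icc' hα₀pos.le hcont.continuousOn
      (show v ∈ Set.Icc (φ α₀) (φ 0) from ⟨hv1.le, hv2.le⟩)
  have hapos : 0 < a := by
    rcases lt_or_eq_of_le ha0 with h | h
    · exact h
    · exfalso; rw [← h] at hav; linarith
  refine ⟨a, hapos, by rw [hav]; exact hv2, ?_⟩
  rintro η ⟨hη0, hη1⟩ α hα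
  rw [abs_lt] at hα
  obtain ⟨hαl, hαr⟩ := hα
  have h1 : φ a ≤ φ α := hmono hαr.le
  have h2 : φ a ≤ φ (-α) := hmono (by linarith)
  have h3 : φ (-α) ≤ φ (-α₀) := hmono (by linarith)
  have h4 : φ α ≤ φ (-α₀) := hmono (by linarith)
  have hkey : φ α₀ + φ (-α₀) < 2 * φ a := by rw [hav]; linarith
  have hα₀a : φ α₀ < φ a := by rw [hav]; exact hv1
  have hbdd : BddBelow (Set.range fun β => η * φ β + (1 - η) * φ (-β)) := by
    refine ⟨0, ?_⟩
    rintro x ⟨β, rfl⟩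
    exact add_nonneg (mul_nonneg hη0 (hnonneg β))
      (mul_nonneg (by linarith) (hnonneg (-β)))
  rcases le_or_gt (1/2 : ℝ) η with hη | hη
  · have hle : (⨅ β : ℝ, (η * φ β + (1 - η) * φ (-β))) ≤ η * φ α₀ + (1 - η) * φ (-α₀) :=
      ciInf_le hbdd α₀
    have hlt : η * φ α₀ + (1 - η) * φ (-α₀) < η * φ α + (1 - η) * φ (-α) := by
      nlinarith [mul_nonneg (by linarith : (0:ℝ) ≤ η - 1/2) (by linarith : (0:ℝ) ≤ φ α - φ α₀),
        mul_nonneg (by linarith : (0:ℝ) ≤ η - 1/2) (by linarith : (0:ℝ) ≤ φ (-α₀) - φ (-α))]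
    linarith
  · have hle : (⨅ β : ℝ, (η * φ β + (1 - η) * φ (-β))) ≤ η * φ (-α₀) + (1 - η) * φ α₀ := by
      have := ciInf_le hbdd (-α₀)
      rwa [neg_neg] at this
    have hlt : η * φ (-α₀) + (1 - η) * φ α₀ < η * φ α + (1 - η) * φ (-α) := by
      nlinarith [mul_nonneg (by linarith : (0:ℝ) ≤ 1/2 - η) (by linarith : (0:ℝ) ≤ φ (-α) - φ α₀),
        mul_nonneg (by linarith : (0:ℝ) ≤ 1/2 - η) (by linarith : (0:ℝ) ≤ φ (-α₀) - φ α)]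
    linarith
end

section
/- Let φ: ℝ → ℝ be continuous, non-increasing, non-negative with lim_{α→∞} φ(α) = 0, and suppose inf_α (φ(α)/2 + φ(-α)/2) < φ(0). Then there exist δ > 0 and c > 0 with φ(c) < φ(0) such that: (i) for all η ∈ [0,1] and all α ∈ [-c, c], η·φ(α) + (1-η)·φ(-α) ≥ inf_β (η·φ(β) + (1-η)·φ(-β)) + δ; and (ii) for all α > c, φ(α) < φ(c). -/
open Filter Topology

theorem stmt_4 (φ : ℝ → ℝ) (hcont : Continuous φ) (hmono : Antitone φ)
    (hnonneg : ∀ α, 0 ≤ φ α) (hlim : Tendsto φ atTop (𝓝 0))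
    (hgap : (⨅ α : ℝ, (φ α / 2 + φ (-α) / 2)) < φ 0) :
    ∃ δ > (0 : ℝ), ∃ c > (0 : ℝ), φ c < φ 0 ∧
      (∀ η ∈ Set.Icc (0 : ℝ) 1, ∀ α ∈ Set.Icc (-c) c,
        η * φ α + (1 - η) * φ (-α) ≥ (⨅ β : ℝ, (η * φ β + (1 - η) * φ (-β))) + δ) ∧
      (∀ α : ℝ, c < α → φ α < φ c) := by
  set H := ⨅ α : ℝ, (φ α / 2 + φ (-α) / 2) with hH
  have hH0 : 0 ≤ H := le_ciInf fun α => by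
    have h1 := hnonneg α; have h2 := hnonneg (-α); linarith
  set v : ℝ := (H + φ 0) / 2 with hv
  have hvpos : 0 < v := by simp only [hv]; linarith
  have hvlt : v < φ 0 := by simp only [hv]; linarith
  have hHv : H < v := by simp only [hv]; linarith
  -- find α0 with φ α0 < v
  have hev : ∀ᶠ x in atTop, φ x < v := hlim.eventually (gt_mem_nhds hvpos)
  obtain ⟨α0, hα0v, hα00⟩ := (hev.and (eventually_ge_atTop (0:ℝ))).exists
  -- IVT to get x with φ x = v
  have hmem : v ∈ Set.Icc (φ α0) (φ 0) := ⟨le_of_lt hα0v, le_of_lt hvlt⟩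
  obtain ⟨x, hx, hfx⟩ := intermediate_value_Icc' hα00 hcont.continuousOn hmem
  set S : Set ℝ := φ ⁻¹' {v} with hS
  have hSne : S.Nonempty := ⟨x, hfx⟩
  have hSbdd : BddAbove S := by
    refine ⟨α0, fun y hy => ?_⟩
    by_contra hlt
    push_neg at hlt
    have := hmono hlt.le
    simp only [hS, Set.mem_preimage, Set.mem_singleton_iff] at hy
    linarith
  have hSclosed : IsClosed S := isClosed_singleton.preimage hcont
  set c := sSup S with hc
  have hcS : c ∈ S := hSclosed.csSup_mem hSne hSbdd
  have hφc : φ c = v := hcS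
  have hcpos : 0 < c := by
    by_contra h
    push_neg at h
    have := hmono h
    linarith
  refine ⟨v - H, by linarith, c, hcpos, by rw [hφc]; exact hvlt, ?_, ?_⟩
  · intro η hη α hα
    obtain ⟨hη0, hη1⟩ := hη
    obtain ⟨hα1, hα2⟩ := hα
    have hbdd : BddBelow (Set.range fun β : ℝ => η * φ β + (1 - η) * φ (-β)) := by
      refine ⟨0, ?_⟩
      rintro y ⟨β, rfl⟩
      have h1 := hnonneg β; have h2 := hnonneg (-β)
      have := mul_nonneg hη0 h1
      have := mul_nonneg (by linarith : (0:ℝ) ≤ 1 - η) h2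
      dsimp; linarith
    have hIH : (⨅ β : ℝ, (η * φ β + (1 - η) * φ (-β))) ≤ H := by
      refine le_ciInf fun b => ?_
      have h1 := ciInf_le hbdd b
      have h2 := ciInf_le hbdd (-b)
      rw [neg_neg] at h2
      linarith
    have hφα : φ c ≤ φ α := hmono hα2
    have hφnα : φ c ≤ φ (-α) := hmono (by linarith : -α ≤ c)
    have hLHS : v ≤ η * φ α + (1 - η) * φ (-α) := by
      have h1 := mul_le_mul_of_nonneg_left hφα hη0
      have h2 := mul_le_mul_of_nonneg_left hφnα (by linarith : (0:ℝ) ≤ 1 - η)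
      nlinarith [hφc]
    linarith
  · intro α hcα
    have hle : φ α ≤ φ c := hmono hcα.le
    rcases lt_or_eq_of_le hle with h | h
    · exact h
    · exfalso
      have : α ∈ S := by
        simp only [hS, Set.mem_preimage, Set.mem_singleton_iff]
        rw [h, hφc]
      have := le_csSup hSbdd this
      rw [← hc] at this
      linarith
end

section
/- Let φ: ℝ → ℝ be continuous, non-increasing, non-negative with lim_{α→∞} φ(α) = 0. Suppose 0 is a minimizer of α ↦ η·φ(α) + (1-η)·φ(-α), and suppose that every minimizer of C_φ(η', ·) is a minimizer of C(η', ·) = η'·𝟙[α ≤ 0] + (1-η')·𝟙[α > 0] for all η' ∈ [0,1]. Then η = 1/2. -/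
open Filter Topology

theorem stmt_6 (φ : ℝ → ℝ) (hcont : Continuous φ) (hmono : Antitone φ)
    (hnonneg : ∀ α, 0 ≤ φ α) (hlim : Tendsto φ atTop (𝓝 0))
    (η : ℝ) (hη : η ∈ Set.Icc (0 : ℝ) 1)
    (hzero : ∀ α : ℝ, η * φ 0 + (1 - η) * φ 0 ≤ η * φ α + (1 - η) * φ (-α))
    (hcons : ∀ η' ∈ Set.Icc (0 : ℝ) 1, ∀ α : ℝ,
      (∀ β : ℝ, η' * φ α + (1 - η') * φ (-α) ≤ η' * φ β + (1 - η') * φ (-β)) →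
      (∀ β : ℝ,
        η' * (if α ≤ 0 then (1 : ℝ) else 0) + (1 - η') * (if 0 < α then (1 : ℝ) else 0)
          ≤ η' * (if β ≤ 0 then (1 : ℝ) else 0) + (1 - η') * (if 0 < β then (1 : ℝ) else 0))) :
    η = 1 / 2 := by
  have h1 := hcons η hη 0 (by simpa using hzero) 1
  have h2 := hcons (1 - η) ⟨by linarith [hη.2], by linarith [hη.1]⟩ 0
      (fun β => by have := hzero (-β); simp at this ⊢; linarith) 1
  norm_num at h1 h2
  linarith
end

section
/- For the ρ-margin loss φ_ρ(α) = min(1, max(1 - α/ρ, 0)), for every η ∈ [0,1], inf_{α ∈ ℝ} (η·φ_ρ(α) + (1-η)·φ_ρ(-α)) = min(η, 1-η). -/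
/-! Since the loss is nonnegative and equals 1 on (-∞, 0], a point α ≤ 0 pays at least η and a
point α ≥ 0 at least 1 - η, so the conditional risk never drops below min η (1 - η); it equals
η at α = -ρ and 1 - η at α = ρ, where the loss vanishes. -/

section ConditionalRisk

variable {φ : ℝ → ℝ} {η : ℝ}

lemma min_le_conditionalRisk (hφ0 : ∀ α, 0 ≤ φ α) (hφ1 : ∀ α ≤ 0, φ α = 1)
    (hη0 : 0 ≤ η) (hη1 : η ≤ 1) (α : ℝ) :
    min η (1 - η) ≤ η * φ α + (1 - η) * φ (-α) := by
  rcases le_total α 0 with hα | hα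
  · have := mul_nonneg (sub_nonneg.2 hη1) (hφ0 (-α))
    rw [hφ1 α hα]
    linarith [min_le_left η (1 - η)]
  · have := mul_nonneg hη0 (hφ0 α)
    rw [hφ1 (-α) (neg_nonpos.2 hα)]
    linarith [min_le_right η (1 - η)]

theorem iInf_conditionalRisk_eq_min (hφ0 : ∀ α, 0 ≤ φ α) (hφ1 : ∀ α ≤ 0, φ α = 1)
    {t : ℝ} (ht : φ t = 0) (hη0 : 0 ≤ η) (hη1 : η ≤ 1) :
    ⨅ α, η * φ α + (1 - η) * φ (-α) = min η (1 - η) := by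
  have hlow := min_le_conditionalRisk hφ0 hφ1 hη0 hη1
  have hbdd : BddBelow (Set.range fun α => η * φ α + (1 - η) * φ (-α)) :=
    ⟨_, Set.forall_mem_range.2 hlow⟩
  have ht_pos : 0 < t := by
    by_contra! h
    simp [hφ1 t h] at ht
  have hφ_neg : φ (-t) = 1 := hφ1 (-t) (by linarith)
  refine le_antisymm (le_min ?_ ?_) (le_ciInf hlow)
  · exact ciInf_le_of_le hbdd (-t) (by simp [hφ_neg, ht])
  · exact ciInf_le_of_le hbdd t (by simp [hφ_neg, ht])

end ConditionalRisk

section MarginLoss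

variable {ρ : ℝ}

noncomputable def marginLoss (ρ α : ℝ) : ℝ := min 1 (max (1 - α / ρ) 0)

lemma marginLoss_nonneg (ρ α : ℝ) : 0 ≤ marginLoss ρ α :=
  le_min zero_le_one (le_max_right _ _)

lemma marginLoss_of_nonpos (hρ : 0 ≤ ρ) {α : ℝ} (hα : α ≤ 0) : marginLoss ρ α = 1 := by
  have : α / ρ ≤ 0 := div_nonpos_of_nonpos_of_nonneg hα hρ
  rw [marginLoss, max_eq_left (by linarith), min_eq_left (by linarith)]

lemma marginLoss_self (hρ : ρ ≠ 0) : marginLoss ρ ρ = 0 := by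
  simp [marginLoss, div_self hρ]

end MarginLoss

theorem stmt_8 (ρ : ℝ) (hρ : 0 < ρ)
    (φ : ℝ → ℝ) (hφ : ∀ α, φ α = min 1 (max (1 - α / ρ) 0))
    (η : ℝ) (hη : η ∈ Set.Icc (0 : ℝ) 1) :
    (⨅ α : ℝ, (η * φ α + (1 - η) * φ (-α))) = min η (1 - η) := by
  obtain rfl : φ = marginLoss ρ := funext hφ
  exact iInf_conditionalRisk_eq_min (marginLoss_nonneg ρ) (fun _ => marginLoss_of_nonpos hρ.le)
    (marginLoss_self hρ.ne') hη.1 hη.2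
end

section
/- Let X = ℝ^d with a norm, let ℚ and ℚ' be Borel probability measures on X with W_∞(ℚ, ℚ') ≤ ε, and let g: X → [0, ∞] be Borel measurable such that the function S_ε(g)(x) = sup_{‖h‖ ≤ ε} g(x + h) is ℚ-measurable. Then ∫ S_ε(g) dℚ ≥ ∫ g dℚ'. -/
/-!
Fix a level `s` and a compact `K ⊆ {g > s}`. A coupling of `ℚ` and `ℚ'` whose displacement is
a.s. `< δ` transports `ℚ' K` into `ℚ` of the open `δ`-thickening of `K`; letting `δ ↓ ε` gives
`ℚ' K ≤ ℚ (cthickening ε K)`. By compactness every point of `cthickening ε K` lies within `ε` of a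
point of `K`, hence in `{S_ε g > s}`. Inner regularity of `ℚ'` then yields
`ℚ' {g > s} ≤ ℚ {S_ε g > s}` for every `s`, and the layer-cake formula (applied to the
truncations `min g N`) turns this comparison of tails into the comparison of integrals.
-/

open MeasureTheory Filter Topology Set Metric
open scoped ENNReal

section LayerCake

variable {α β : Type*} [MeasurableSpace α] [MeasurableSpace β] {μ : Measure α} {ν : Measure β}

theorem lintegral_eq_lintegral_meas_lt_of_ne_top {f : α → ℝ≥0∞} (hf : AEMeasurable f μ)
    (hf_ne_top : ∀ x, f x ≠ ∞) :
    ∫⁻ x, f x ∂μ = ∫⁻ t in Ioi 0, μ {x | ENNReal.ofReal t < f x} := by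
  have hf_real : AEMeasurable (fun x => (f x).toReal) μ := hf.ennreal_toReal
  calc ∫⁻ x, f x ∂μ = ∫⁻ x, ENNReal.ofReal (f x).toReal ∂μ := by
        simp only [ENNReal.ofReal_toReal (hf_ne_top _)]
    _ = ∫⁻ t in Ioi 0, μ {x | t < (f x).toReal} :=
        lintegral_eq_lintegral_meas_lt μ (.of_forall fun _ => ENNReal.toReal_nonneg) hf_real
    _ = ∫⁻ t in Ioi 0, μ {x | ENNReal.ofReal t < f x} := by
        refine setLIntegral_congr_fun measurableSet_Ioi fun t ht => ?_
        simp only [ENNReal.ofReal_lt_iff_lt_toReal (le_of_lt ht) (hf_ne_top _)]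

theorem lintegral_eq_iSup_lintegral_min_natCast {f : α → ℝ≥0∞} (hf : AEMeasurable f μ) :
    ∫⁻ x, f x ∂μ = ⨆ N : ℕ, ∫⁻ x, min (f x) N ∂μ := by
  rw [← lintegral_iSup' (fun N => hf.min aemeasurable_const)
    (.of_forall fun x N M hNM => min_le_min_left _ (Nat.cast_le.mpr hNM))]
  congr with x
  rw [← inf_iSup_eq, ENNReal.iSup_natCast, inf_top_eq]

theorem lintegral_le_lintegral_of_forall_measure_lt_le {f : α → ℝ≥0∞} {g : β → ℝ≥0∞}
    (hf : AEMeasurable f μ) (hg : AEMeasurable g ν)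
    (h : ∀ s, μ {x | s < f x} ≤ ν {y | s < g y}) :
    ∫⁻ x, f x ∂μ ≤ ∫⁻ y, g y ∂ν := by
  rw [lintegral_eq_iSup_lintegral_min_natCast hf, lintegral_eq_iSup_lintegral_min_natCast hg]
  refine iSup_mono fun N => ?_
  have min_ne_top (a : ℝ≥0∞) : min a N ≠ ∞ := (min_lt_of_right_lt (ENNReal.natCast_lt_top N)).ne
  rw [lintegral_eq_lintegral_meas_lt_of_ne_top (hf.min aemeasurable_const) fun _ => min_ne_top _,
    lintegral_eq_lintegral_meas_lt_of_ne_top (hg.min aemeasurable_const) fun _ => min_ne_top _]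
  refine lintegral_mono fun t => ?_
  by_cases htN : ENNReal.ofReal t < N
  · simpa only [lt_min_iff, htN, and_true] using h _
  · simp [htN]

end LayerCake

section Coupling

variable {α : Type*} [PseudoEMetricSpace α] [MeasurableSpace α]

noncomputable def wassersteinInfty (μ ν : Measure α) : ℝ≥0∞ :=
  ⨅ (γ : Measure (α × α)) (_ : γ.map Prod.fst = μ ∧ γ.map Prod.snd = ν),
    essSup (fun p : α × α => edist p.1 p.2) γ

variable [OpensMeasurableSpace α] {μ ν : Measure α} {B : Set α}

theorem measure_le_measure_thickening_of_wassersteinInfty_lt {δ : ℝ}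
    (hW : wassersteinInfty μ ν < ENNReal.ofReal δ) (hB : MeasurableSet B) :
    ν B ≤ μ (thickening δ B) := by
  obtain ⟨γ, ⟨hγμ, hγν⟩, hγ⟩ : ∃ γ : Measure (α × α), (γ.map Prod.fst = μ ∧ γ.map Prod.snd = ν) ∧
      essSup (fun p : α × α => edist p.1 p.2) γ < ENNReal.ofReal δ := by
    simpa only [wassersteinInfty, iInf_lt_iff, exists_prop] using hW
  have h_sub : (Prod.snd ⁻¹' B : Set (α × α)) ≤ᵐ[γ] Prod.fst ⁻¹' thickening δ B := by
    filter_upwards [ae_lt_of_essSup_lt hγ] with p hp hpB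
    exact mem_thickening_iff_infEDist_lt.mpr ((infEDist_le_edist_of_mem hpB).trans_lt hp)
  calc ν B = γ (Prod.snd ⁻¹' B) := by rw [← hγν, Measure.map_apply measurable_snd hB]
    _ ≤ γ (Prod.fst ⁻¹' thickening δ B) := measure_mono_ae h_sub
    _ = μ (thickening δ B) := by
        rw [← hγμ, Measure.map_apply measurable_fst isOpen_thickening.measurableSet]

theorem measure_le_measure_cthickening_of_wassersteinInfty_le [IsFiniteMeasure μ] {ε : ℝ}
    (hε : 0 ≤ ε) (hW : wassersteinInfty μ ν ≤ ENNReal.ofReal ε) (hB : MeasurableSet B) :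
    ν B ≤ μ (cthickening ε B) := by
  have h_lim : Tendsto (fun δ => μ (thickening δ B)) (𝓝[>] ε)
      (𝓝 (μ (⋂ δ > ε, thickening δ B))) :=
    tendsto_measure_biInter_gt (fun _ _ => isOpen_thickening.nullMeasurableSet)
      (fun _ _ _ hij => thickening_mono hij B) ⟨ε + 1, by linarith, measure_ne_top μ _⟩
  rw [cthickening_eq_iInter_thickening hε]
  refine ge_of_tendsto h_lim (eventually_nhdsWithin_of_forall fun δ hδ => ?_)
  exact measure_le_measure_thickening_of_wassersteinInfty_lt
    (hW.trans_lt ((ENNReal.ofReal_lt_ofReal_iff_of_nonneg hε).mpr hδ)) hB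

end Coupling

section BallSup

variable {E : Type*} [NormedAddCommGroup E]

/-- The paper's `S_ε(g)`. -/
noncomputable def ballSup (ε : ℝ) (g : E → ℝ≥0∞) (x : E) : ℝ≥0∞ :=
  ⨆ (h : E) (_ : ‖h‖ ≤ ε), g (x + h)

theorem le_ballSup {ε : ℝ} {g : E → ℝ≥0∞} {x y : E} (hxy : dist x y ≤ ε) :
    g y ≤ ballSup ε g x := by
  have h : ‖y - x‖ ≤ ε := by rwa [← dist_eq_norm, dist_comm]
  calc g y = g (x + (y - x)) := by rw [add_sub_cancel]
    _ ≤ ballSup ε g x := le_iSup₂ (f := fun h (_ : ‖h‖ ≤ ε) => g (x + h)) (y - x) h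

variable [MeasurableSpace E] [OpensMeasurableSpace E] {Q Q' : Measure E}

theorem measure_lt_le_measure_lt_ballSup [IsFiniteMeasure Q] [Q'.InnerRegular] {ε : ℝ}
    (hε : 0 ≤ ε) (hW : wassersteinInfty Q Q' ≤ ENNReal.ofReal ε) {g : E → ℝ≥0∞}
    (hg : Measurable g) (s : ℝ≥0∞) :
    Q' {x | s < g x} ≤ Q {x | s < ballSup ε g x} := by
  rw [(measurableSet_lt measurable_const hg).measure_eq_iSup_isCompact]
  refine iSup_le fun K => iSup_le fun hKs => iSup_le fun hK => ?_
  refine (measure_le_measure_cthickening_of_wassersteinInfty_le hε hW hK.measurableSet).trans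
    (measure_mono ?_)
  rw [hK.cthickening_eq_biUnion_closedBall hε]
  simp only [iUnion_subset_iff]
  exact fun y hyK x hxy => (hKs hyK).trans_le (le_ballSup hxy)

end BallSup

/-- If `W_∞(ℚ, ℚ') ≤ ε` (infimum over couplings of the essential supremum of `‖x - y‖`),
then `∫ S_ε(g) dℚ ≥ ∫ g dℚ'`, where `S_ε(g)(x) = sup_{‖h‖ ≤ ε} g (x + h)`. -/
theorem stmt_10 {E : Type*} [NormedAddCommGroup E] [NormedSpace ℝ E]
    [FiniteDimensional ℝ E] [MeasurableSpace E] [BorelSpace E]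
    (Q Q' : Measure E) [IsProbabilityMeasure Q] [IsProbabilityMeasure Q']
    (ε : ℝ) (hε : 0 ≤ ε)
    (hW : (⨅ (γ : Measure (E × E)) (_ : γ.map Prod.fst = Q ∧ γ.map Prod.snd = Q'),
        essSup (fun p : E × E => (‖p.1 - p.2‖₊ : ℝ≥0∞)) γ) ≤ ENNReal.ofReal ε)
    (g : E → ℝ≥0∞) (hg : Measurable g)
    (hS : AEMeasurable (fun x => ⨆ (h : E) (_ : ‖h‖ ≤ ε), g (x + h)) Q) :
    ∫⁻ x, g x ∂Q' ≤ ∫⁻ x, (⨆ (h : E) (_ : ‖h‖ ≤ ε), g (x + h)) ∂Q := by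
  have hW' : wassersteinInfty Q Q' ≤ ENNReal.ofReal ε := by
    simpa only [wassersteinInfty, edist_eq_enorm_sub, enorm_eq_nnnorm] using hW
  exact lintegral_le_lintegral_of_forall_measure_lt_le hg.aemeasurable hS
    (measure_lt_le_measure_lt_ballSup hε hW' hg)
end

section
/- Let η ∈ [0,1] with η > 1/2, let φ: ℝ → [0,∞) be continuous non-increasing with inf_α(φ(α)/2 + φ(-α)/2) < φ(0), and let c > 0 satisfy φ(c) < φ(0) and: C_φ(η, α) > C_φ*(η) for all α ∈ (-c, c). Then for any α ≤ -c, C_φ(η, -α) < C_φ(η, α), where C_φ(η, α) = η·φ(α) + (1-η)·φ(-α). -/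
theorem stmt_13 (φ : ℝ → ℝ) (hcont : Continuous φ) (hmono : Antitone φ)
    (hnonneg : ∀ α, 0 ≤ φ α)
    (hgap : (⨅ α : ℝ, (φ α / 2 + φ (-α) / 2)) < φ 0)
    (η : ℝ) (hη : η ∈ Set.Icc (0 : ℝ) 1) (hη2 : 1 / 2 < η)
    (c : ℝ) (hc : 0 < c) (hφc : φ c < φ 0)
    (hmin : ∀ α ∈ Set.Ioo (-c) c,
      η * φ α + (1 - η) * φ (-α) > ⨅ β : ℝ, (η * φ β + (1 - η) * φ (-β))) :
    ∀ α : ℝ, α ≤ -c →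
      η * φ (-α) + (1 - η) * φ α < η * φ α + (1 - η) * φ (-α) := by
  intro α hα
  have h1 : φ 0 ≤ φ α := hmono (by linarith)
  have h2 : φ (-α) ≤ φ c := hmono (by linarith)
  have h3 : φ (-α) < φ α := by linarith
  nlinarith
end
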